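/- Let G and H be locally compact Hausdorff topological groups acting freely and properly by automorphisms on the left and right, respectively, of a topological groupoid Γ, with commuting actions. Then the semidirect-product groupoid (Γ/H)⋊G (formed from the action t·(xH) = (t·x)H of G on the quotient groupoid Γ/H) acts freely and properly on the left of the space Γ, with fibre map ρ(y) = (r(y)·H, e), via (xH, t)·y = x(t·y) whenever s(x) = r(t·y). Freeness means that (xH, t)·y = y forces (xH, t) to be a unit of (Γ/H)⋊G, and properness means that the map ((xH,t), y) ↦ ((xH,t)·y, y) from the set of composable pairs to Γ × Γ is proper. -/

import Mathlib

/-!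
Freeness of `H` makes the representative `x` of `xH` with `s(x) = r(t·y)` unique, so
`(xH, t)·y = x(t·y)` is well defined and the action axioms reduce to those of `Γ`.
Continuity: on `Γ × G × Γ`, which maps onto `Γ/H × G × Γ` by an open quotient map, that
representative is `x·h` with `h` the element carrying `s(x)` to `t·r(y)`; `h` depends
continuously on this pair because for a free proper action `(x, h) ↦ (x·h, x)` is a closed
embedding. Freeness: `x(t·y) = y` gives `t·s(y) = s(y)`, so `t = e` and `x = r(y)`.
Properness: `((xH, t), y)` is a continuous function of `(x(t·y), t, y)`, which ranges over a
compact set because `t·s(y) = s(x(t·y))` and `G` acts properly.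
-/

open MeasureTheory Filter Topology

/-- A topological groupoid: a space `Γ` with a set of units, continuous open range and
source maps onto the units, a (partially meaningful, totalized) continuous multiplication
defined for composable pairs, and a continuous inversion. -/
structure TopGroupoid (Γ : Type*) [TopologicalSpace Γ] where
  unit : Set Γ
  rng : Γ → Γ
  src : Γ → Γ
  mul : Γ → Γ → Γ
  inv : Γ → Γ
  rng_mem : ∀ x, rng x ∈ unit
  src_mem : ∀ x, src x ∈ unit
  rng_unit : ∀ u ∈ unit, rng u = u
  src_unit : ∀ u ∈ unit, src u = u
  continuous_rng : Continuous rng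
  continuous_src : Continuous src
  open_rng : ∀ U : Set Γ, IsOpen U → ∃ V : Set Γ, IsOpen V ∧ rng '' U = V ∩ unit
  open_src : ∀ U : Set Γ, IsOpen U → ∃ V : Set Γ, IsOpen V ∧ src '' U = V ∩ unit
  continuous_mul : ContinuousOn (fun p : Γ × Γ => mul p.1 p.2) {p : Γ × Γ | src p.1 = rng p.2}
  continuous_inv : Continuous inv
  rng_mul : ∀ x y, src x = rng y → rng (mul x y) = rng x
  src_mul : ∀ x y, src x = rng y → src (mul x y) = src y
  mul_assoc' : ∀ x y z, src x = rng y → src y = rng z → mul (mul x y) z = mul x (mul y z)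
  rng_mul_self : ∀ x, mul (rng x) x = x
  mul_src_self : ∀ x, mul x (src x) = x
  inv_inv' : ∀ x, inv (inv x) = x
  src_inv : ∀ x, src (inv x) = rng x
  rng_inv : ∀ x, rng (inv x) = src x
  inv_mul' : ∀ x, mul (inv x) x = src x
  mul_inv' : ∀ x, mul x (inv x) = rng x

section Actions

variable {Γ : Type*} [TopologicalSpace Γ]

/-- A (continuous) right action of a group `H` on a topological groupoid by automorphisms. -/
structure GroupRightAction (𝒢 : TopGroupoid Γ) (H : Type*) [TopologicalSpace H] [Group H] where
  act : Γ → H → Γ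
  continuous_act : Continuous fun p : Γ × H => act p.1 p.2
  act_one : ∀ x, act x 1 = x
  act_mul : ∀ x (h k : H), act (act x h) k = act x (h * k)
  unit_act : ∀ u ∈ 𝒢.unit, ∀ h : H, act u h ∈ 𝒢.unit
  src_act : ∀ x h, 𝒢.src (act x h) = act (𝒢.src x) h
  rng_act : ∀ x h, 𝒢.rng (act x h) = act (𝒢.rng x) h
  mul_act : ∀ x y h, 𝒢.src x = 𝒢.rng y → 𝒢.mul (act x h) (act y h) = act (𝒢.mul x y) h
  inv_act : ∀ x h, 𝒢.inv (act x h) = act (𝒢.inv x) h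

namespace GroupRightAction

variable {𝒢 : TopGroupoid Γ} {H : Type*} [TopologicalSpace H] [Group H]

/-- The action is free. -/
def Free (A : GroupRightAction 𝒢 H) : Prop := ∀ x h, A.act x h = x → h = 1

/-- The action is proper: `(x,h) ↦ (x·h, x)` has compact preimages of compact sets. -/
def Proper (A : GroupRightAction 𝒢 H) : Prop :=
  ∀ K : Set (Γ × Γ), IsCompact K → IsCompact {p : Γ × H | (A.act p.1 p.2, p.1) ∈ K}

/-- The orbit equivalence relation. -/
def setoid (A : GroupRightAction 𝒢 H) : Setoid Γ where
  r x y := ∃ h : H, A.act x h = y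
  iseqv := by
    refine ⟨fun x => ⟨1, A.act_one x⟩, ?_, ?_⟩
    · rintro x y ⟨h, rfl⟩
      exact ⟨h⁻¹, by rw [A.act_mul]; simp [A.act_one]⟩
    · rintro x y z ⟨h, rfl⟩ ⟨k, rfl⟩
      exact ⟨h * k, (A.act_mul x h k).symm⟩

end GroupRightAction

/-- A (continuous) left action of a group `G` on a topological groupoid by automorphisms. -/
structure GroupLeftAction (𝒢 : TopGroupoid Γ) (G : Type*) [TopologicalSpace G] [Group G] where
  act : G → Γ → Γ
  continuous_act : Continuous fun p : G × Γ => act p.1 p.2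
  one_act : ∀ x, act 1 x = x
  act_act : ∀ (t u : G) (x : Γ), act t (act u x) = act (t * u) x
  unit_act : ∀ u ∈ 𝒢.unit, ∀ t : G, act t u ∈ 𝒢.unit
  src_act : ∀ t x, 𝒢.src (act t x) = act t (𝒢.src x)
  rng_act : ∀ t x, 𝒢.rng (act t x) = act t (𝒢.rng x)
  mul_act : ∀ t x y, 𝒢.src x = 𝒢.rng y → 𝒢.mul (act t x) (act t y) = act t (𝒢.mul x y)
  inv_act : ∀ t x, 𝒢.inv (act t x) = act t (𝒢.inv x)

namespace GroupLeftAction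

variable {𝒢 : TopGroupoid Γ} {G : Type*} [TopologicalSpace G] [Group G]

/-- The action is free. -/
def Free (A : GroupLeftAction 𝒢 G) : Prop := ∀ t x, A.act t x = x → t = 1

/-- The action is proper: `(t,x) ↦ (t·x, x)` has compact preimages of compact sets. -/
def Proper (A : GroupLeftAction 𝒢 G) : Prop :=
  ∀ K : Set (Γ × Γ), IsCompact K → IsCompact {p : G × Γ | (A.act p.1 p.2, p.2) ∈ K}

/-- The orbit equivalence relation. -/
def setoid (A : GroupLeftAction 𝒢 G) : Setoid Γ where
  r x y := ∃ t : G, A.act t x = y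
  iseqv := by
    refine ⟨fun x => ⟨1, A.one_act x⟩, ?_, ?_⟩
    · rintro x y ⟨t, rfl⟩
      exact ⟨t⁻¹, by rw [A.act_act]; simp [A.one_act]⟩
    · rintro x y z ⟨t, rfl⟩ ⟨u, rfl⟩
      exact ⟨u * t, (A.act_act u t x).symm⟩

end GroupLeftAction

/-- A left action of a topological groupoid `𝒢` on a space `Ω`, with fibre map `ρ`. -/
structure GroupoidLeftAction (𝒢 : TopGroupoid Γ) (Ω : Type*) [TopologicalSpace Ω] where
  ρ : Ω → Γ
  act : Γ → Ω → Ω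
  ρ_mem : ∀ u, ρ u ∈ 𝒢.unit
  continuous_ρ : Continuous ρ
  ρ_surj : ∀ v ∈ 𝒢.unit, ∃ u, ρ u = v
  open_ρ : ∀ U : Set Ω, IsOpen U → ∃ V : Set Γ, IsOpen V ∧ ρ '' U = V ∩ 𝒢.unit
  continuous_act : ContinuousOn (fun p : Γ × Ω => act p.1 p.2) {p : Γ × Ω | 𝒢.src p.1 = ρ p.2}
  ρ_act : ∀ x u, 𝒢.src x = ρ u → ρ (act x u) = 𝒢.rng x
  unit_act : ∀ u, act (ρ u) u = u
  act_act : ∀ x y u, 𝒢.src y = ρ u → 𝒢.src x = 𝒢.rng y → act x (act y u) = act (𝒢.mul x y) u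

namespace GroupoidLeftAction

variable {𝒢 : TopGroupoid Γ} {Ω : Type*} [TopologicalSpace Ω]

/-- The action is free. -/
def Free (A : GroupoidLeftAction 𝒢 Ω) : Prop :=
  ∀ x u, 𝒢.src x = A.ρ u → A.act x u = u → x ∈ 𝒢.unit

/-- The action is proper: `(x,u) ↦ (x·u, u)` on the composable set has compact preimages of
compact sets. -/
def Proper (A : GroupoidLeftAction 𝒢 Ω) : Prop :=
  ∀ K : Set (Ω × Ω), IsCompact K →
    IsCompact {p : Γ × Ω | 𝒢.src p.1 = A.ρ p.2 ∧ (A.act p.1 p.2, p.2) ∈ K}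

/-- The orbit equivalence relation on `Ω`. -/
def setoid (A : GroupoidLeftAction 𝒢 Ω) : Setoid Ω where
  r u v := ∃ x, 𝒢.src x = A.ρ u ∧ A.act x u = v
  iseqv := by
    constructor
    · exact fun u => ⟨A.ρ u, 𝒢.src_unit _ (A.ρ_mem u), A.unit_act u⟩
    · rintro u v ⟨x, hx, rfl⟩
      refine ⟨𝒢.inv x, ?_, ?_⟩
      · rw [𝒢.src_inv, A.ρ_act x u hx]
      · rw [A.act_act _ x u hx (𝒢.src_inv x), 𝒢.inv_mul', hx, A.unit_act]
    · rintro u v w ⟨x, hx, rfl⟩ ⟨y, hy, rfl⟩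
      have hyr : 𝒢.src y = 𝒢.rng x := by rw [hy, A.ρ_act x u hx]
      refine ⟨𝒢.mul y x, ?_, ?_⟩
      · rw [𝒢.src_mul y x hyr, hx]
      · rw [← A.act_act y x u hx hyr]

end GroupoidLeftAction

/-- A right action of a topological groupoid `𝒢` on a space `Ω`, with fibre map `σ`. -/
structure GroupoidRightAction (𝒢 : TopGroupoid Γ) (Ω : Type*) [TopologicalSpace Ω] where
  σ : Ω → Γ
  act : Ω → Γ → Ω
  σ_mem : ∀ u, σ u ∈ 𝒢.unit
  continuous_σ : Continuous σ
  σ_surj : ∀ v ∈ 𝒢.unit, ∃ u, σ u = v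
  open_σ : ∀ U : Set Ω, IsOpen U → ∃ V : Set Γ, IsOpen V ∧ σ '' U = V ∩ 𝒢.unit
  continuous_act : ContinuousOn (fun p : Ω × Γ => act p.1 p.2) {p : Ω × Γ | σ p.1 = 𝒢.rng p.2}
  σ_act : ∀ u x, σ u = 𝒢.rng x → σ (act u x) = 𝒢.src x
  unit_act : ∀ u, act u (σ u) = u
  act_act : ∀ u x y, σ u = 𝒢.rng x → 𝒢.src x = 𝒢.rng y → act (act u x) y = act u (𝒢.mul x y)

namespace GroupoidRightAction

variable {𝒢 : TopGroupoid Γ} {Ω : Type*} [TopologicalSpace Ω]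

/-- The action is free. -/
def Free (A : GroupoidRightAction 𝒢 Ω) : Prop :=
  ∀ u x, A.σ u = 𝒢.rng x → A.act u x = u → x ∈ 𝒢.unit

/-- The action is proper. -/
def Proper (A : GroupoidRightAction 𝒢 Ω) : Prop :=
  ∀ K : Set (Ω × Ω), IsCompact K →
    IsCompact {p : Ω × Γ | A.σ p.1 = 𝒢.rng p.2 ∧ (A.act p.1 p.2, p.1) ∈ K}

/-- The orbit equivalence relation on `Ω`. -/
def setoid (A : GroupoidRightAction 𝒢 Ω) : Setoid Ω where
  r u v := ∃ x, A.σ u = 𝒢.rng x ∧ A.act u x = v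
  iseqv := by
    constructor
    · exact fun u => ⟨A.σ u, (𝒢.rng_unit _ (A.σ_mem u)).symm, A.unit_act u⟩
    · rintro u v ⟨x, hx, rfl⟩
      refine ⟨𝒢.inv x, ?_, ?_⟩
      · rw [𝒢.rng_inv, A.σ_act u x hx]
      · rw [A.act_act u x _ hx (𝒢.rng_inv x).symm, 𝒢.mul_inv', ← hx, A.unit_act]
    · rintro u v w ⟨x, hx, rfl⟩ ⟨y, hy, rfl⟩
      have hxy : 𝒢.src x = 𝒢.rng y := by rw [← A.σ_act u x hx, hy]
      refine ⟨𝒢.mul x y, ?_, ?_⟩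
      · rw [𝒢.rng_mul x y hxy, hx]
      · rw [A.act_act u x y hx hxy]

end GroupoidRightAction

end Actions

/-- A left Haar system on a topological groupoid: a family of Radon measures indexed by the
units, with support `r⁻¹(u)`, continuous in `u`, and left invariant. -/
def IsHaarSystem {Γ : Type*} [TopologicalSpace Γ] [MeasurableSpace Γ]
    (𝒢 : TopGroupoid Γ) (lam : Γ → Measure Γ) : Prop :=
  (∀ u ∈ 𝒢.unit, ∀ K : Set Γ, IsCompact K → lam u K < ⊤) ∧
  (∀ u ∈ 𝒢.unit, lam u {x | 𝒢.rng x ≠ u} = 0) ∧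
  (∀ u ∈ 𝒢.unit, ∀ V : Set Γ, IsOpen V → (V ∩ 𝒢.rng ⁻¹' {u}).Nonempty → 0 < lam u V) ∧
  (∀ f : Γ → ℝ, Continuous f → HasCompactSupport f →
    ContinuousOn (fun u => ∫ x, f x ∂(lam u)) 𝒢.unit) ∧
  (∀ x : Γ, ∀ f : Γ → ℝ, Continuous f → HasCompactSupport f →
    ∫ y, f (𝒢.mul x y) ∂(lam (𝒢.src x)) = ∫ y, f y ∂(lam (𝒢.rng x)))

open Set

lemma Topology.IsOpenQuotientMap.continuousOn_of_comp {X Y Z : Type*} [TopologicalSpace X]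
    [TopologicalSpace Y] [TopologicalSpace Z] {f : X → Y} {g : Y → Z} {s : Set Y}
    (hf : IsOpenQuotientMap f) (hg : ContinuousOn (g ∘ f) (f ⁻¹' s)) : ContinuousOn g s := by
  intro y hy
  obtain ⟨x, rfl⟩ := hf.surjective y
  have hnhds : 𝓝[s] (f x) = map f (𝓝[f ⁻¹' s] x) := by
    rw [nhdsWithin, ← hf.map_nhds_eq, ← map_inf_principal_preimage, nhdsWithin]
  rw [ContinuousWithinAt, hnhds, tendsto_map'_iff]
  exact hg x hy

namespace TopGroupoid

variable {Γ : Type*} [TopologicalSpace Γ] (𝒢 : TopGroupoid Γ)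

lemma mul_mul_inv_cancel {x z : Γ} (h : 𝒢.src x = 𝒢.rng z) :
    𝒢.mul (𝒢.mul x z) (𝒢.inv z) = x := by
  rw [𝒢.mul_assoc' _ _ _ h (𝒢.rng_inv z).symm, 𝒢.mul_inv', ← h, 𝒢.mul_src_self]

lemma mul_inv_mul_cancel {x z : Γ} (h : 𝒢.src x = 𝒢.src z) :
    𝒢.mul (𝒢.mul x (𝒢.inv z)) z = x := by
  rw [𝒢.mul_assoc' _ _ _ (by rw [𝒢.rng_inv, h]) (𝒢.src_inv z), 𝒢.inv_mul', ← h,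
    𝒢.mul_src_self]

lemma mem_unit_of_mul_eq_self {x y : Γ} (h : 𝒢.src x = 𝒢.rng y) (hxy : 𝒢.mul x y = y) :
    x ∈ 𝒢.unit := by
  rw [← 𝒢.mul_mul_inv_cancel h, hxy, 𝒢.mul_inv']
  exact 𝒢.rng_mem y

end TopGroupoid

namespace GroupLeftAction

variable {Γ G : Type*} [TopologicalSpace Γ] [TopologicalSpace G] [Group G] {𝒢 : TopGroupoid Γ}
  (A : GroupLeftAction 𝒢 G)

lemma act_inv_eq_iff {t : G} {x y : Γ} : A.act t⁻¹ x = y ↔ x = A.act t y := by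
  constructor <;> rintro rfl
  · rw [A.act_act, mul_inv_cancel, A.one_act]
  · rw [A.act_act, inv_mul_cancel, A.one_act]

variable {A}

lemma Proper.isCompact_setOf_src_eq_src_act [T2Space Γ] (hA : A.Proper) {K : Set (Γ × Γ)}
    (hK : IsCompact K) :
    IsCompact {e : Γ × G × Γ | 𝒢.src e.1 = 𝒢.src (A.act e.2.1 e.2.2) ∧ (e.1, e.2.2) ∈ K} := by
  have hK₁ := hK.image continuous_fst
  have hK₂ := hK.image continuous_snd
  -- `t·s(y) = s(w)` with `(w, y) ∈ K` confines `t` to a compact set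
  have hT : IsCompact (Prod.fst '' {p : G × Γ |
      (A.act p.1 p.2, p.2) ∈ (𝒢.src '' (Prod.fst '' K)) ×ˢ (𝒢.src '' (Prod.snd '' K))}) :=
    (hA _ ((hK₁.image 𝒢.continuous_src).prod (hK₂.image 𝒢.continuous_src))).image continuous_fst
  refine (hK₁.prod (hT.prod hK₂)).of_isClosed_subset ?_ ?_
  · exact (isClosed_eq (𝒢.continuous_src.comp continuous_fst)
      (𝒢.continuous_src.comp (A.continuous_act.comp continuous_snd))).inter
      (hK.isClosed.preimage (continuous_fst.prodMk (continuous_snd.comp continuous_snd)))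
  · rintro ⟨w, t, y⟩ ⟨hs, hwy⟩
    refine ⟨mem_image_of_mem _ hwy, ⟨(t, 𝒢.src y), ⟨?_, ?_⟩, rfl⟩, mem_image_of_mem _ hwy⟩
    · exact ⟨w, mem_image_of_mem _ hwy, by rw [hs, A.src_act]⟩
    · exact mem_image_of_mem _ (mem_image_of_mem _ hwy)

end GroupLeftAction

namespace GroupRightAction

variable {Γ H : Type*} [TopologicalSpace Γ] [TopologicalSpace H] [Group H] {𝒢 : TopGroupoid Γ}
  (A : GroupRightAction 𝒢 H)

lemma act_act_inv (x : Γ) (h : H) : A.act (A.act x h) h⁻¹ = x := by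
  rw [A.act_mul, mul_inv_cancel, A.act_one]

lemma mk_eq_mk_iff {x y : Γ} :
    Quotient.mk A.setoid x = Quotient.mk A.setoid y ↔ ∃ h, A.act x h = y :=
  Quotient.eq

lemma mk_act (x : Γ) (h : H) : Quotient.mk A.setoid (A.act x h) = Quotient.mk A.setoid x :=
  Quotient.sound ⟨h⁻¹, A.act_act_inv x h⟩

lemma isOpenQuotientMap_mk : IsOpenQuotientMap (Quotient.mk A.setoid) := by
  refine ⟨Quotient.mk_surjective, continuous_quot_mk, fun U hU => ?_⟩
  have hsat : Quotient.mk A.setoid ⁻¹' (Quotient.mk A.setoid '' U)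
      = ⋃ h : H, (A.act · h) ⁻¹' U := by
    ext x
    simp only [mem_preimage, mem_image, mem_iUnion, mk_eq_mk_iff]
    constructor
    · rintro ⟨y, hy, h, rfl⟩
      exact ⟨h⁻¹, by rwa [act_act_inv]⟩
    · rintro ⟨h, hh⟩
      exact ⟨_, hh, h⁻¹, A.act_act_inv x h⟩
  have hq : IsQuotientMap (Quotient.mk A.setoid) := isQuotientMap_quot_mk
  rw [← hq.isOpen_preimage, hsat]
  exact isOpen_iUnion fun h =>
    hU.preimage (A.continuous_act.comp (continuous_id.prodMk continuous_const))

lemma mk_mem_image_unit_iff {v : Γ} :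
    Quotient.mk A.setoid v ∈ Quotient.mk A.setoid '' 𝒢.unit ↔ v ∈ 𝒢.unit := by
  refine ⟨?_, mem_image_of_mem _⟩
  rintro ⟨u, hu, huv⟩
  obtain ⟨h, rfl⟩ := A.mk_eq_mk_iff.1 huv
  exact A.unit_act u hu h

lemma image_mk_image_rng {U V : Set Γ} (hV : 𝒢.rng '' U = V ∩ 𝒢.unit) :
    Quotient.mk A.setoid '' (𝒢.rng '' U)
      = Quotient.mk A.setoid '' V ∩ Quotient.mk A.setoid '' 𝒢.unit := by
  refine Subset.antisymm (hV ▸ image_inter_subset _ _ _) ?_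
  rintro _ ⟨⟨v, hv, rfl⟩, hunit⟩
  exact ⟨v, hV ▸ ⟨hv, A.mk_mem_image_unit_iff.1 hunit⟩, rfl⟩

variable {A}

lemma Free.act_injective (hA : A.Free) (x : Γ) : Function.Injective (A.act x) := by
  intro h k hhk
  refine mul_inv_eq_one.1 (hA x _ ?_)
  rw [← A.act_mul, hhk, A.act_act_inv]

lemma Free.eq_of_mk_eq_of_src_eq (hA : A.Free) {x y : Γ}
    (hq : Quotient.mk A.setoid x = Quotient.mk A.setoid y) (hs : 𝒢.src x = 𝒢.src y) : x = y := by
  obtain ⟨h, rfl⟩ := A.mk_eq_mk_iff.1 hq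
  rw [hA _ h (by rw [← A.src_act, ← hs]), A.act_one]

lemma Proper.isClosedEmbedding [T2Space Γ] [LocallyCompactSpace Γ] (hproper : A.Proper)
    (hfree : A.Free) : IsClosedEmbedding fun p : Γ × H => (A.act p.1 p.2, p.1) := by
  have hcont : Continuous fun p : Γ × H => (A.act p.1 p.2, p.1) :=
    A.continuous_act.prodMk continuous_fst
  refine .of_continuous_injective_isClosedMap hcont ?_
    (isProperMap_iff_isCompact_preimage.2 ⟨hcont, hproper⟩).isClosedMap
  rintro ⟨x, h⟩ ⟨y, k⟩ hxy
  obtain ⟨hhk, rfl⟩ := Prod.mk.inj hxy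
  exact congrArg _ (hfree.act_injective x hhk)

variable (A)

/-- Junk value `1` when `p.2` is not in the orbit of `p.1`. -/
noncomputable def transl (p : Γ × Γ) : H :=
  open scoped Classical in if h : ∃ k, A.act p.1 k = p.2 then h.choose else 1

lemma act_transl {p : Γ × Γ} (hp : ∃ k, A.act p.1 k = p.2) : A.act p.1 (A.transl p) = p.2 := by
  rw [transl, dif_pos hp]
  exact hp.choose_spec

lemma continuousOn_transl [T2Space Γ] [LocallyCompactSpace Γ] (hfree : A.Free)
    (hproper : A.Proper) : ContinuousOn A.transl {p | ∃ k, A.act p.1 k = p.2} := by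
  have hgraph : ContinuousOn (fun p : Γ × Γ => (p.1, A.transl p)) {p | ∃ k, A.act p.1 k = p.2} := by
    rw [(hproper.isClosedEmbedding hfree).isInducing.continuousOn_iff]
    refine continuous_swap.continuousOn.congr fun p hp => ?_
    simp only [Function.comp_apply, A.act_transl hp, Prod.swap]
  exact continuous_snd.comp_continuousOn hgraph

end GroupRightAction

section Semidirect

variable {Γ G H : Type*} [TopologicalSpace Γ] [TopologicalSpace G] [Group G] [TopologicalSpace H]
  [Group H] {𝒢 : TopGroupoid Γ} (LA : GroupLeftAction 𝒢 G) (RA : GroupRightAction 𝒢 H)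

/-- The condition `s(xH, t) = ρ(y)`, phrased through a representative `x` of `xH`. -/
def SemidirectComposable (p : Quotient RA.setoid × G) (y : Γ) : Prop :=
  ∃ x, Quotient.mk RA.setoid x = p.1 ∧ 𝒢.src x = 𝒢.rng (LA.act p.2 y)

/-- The representative `x` is unique when `H` acts freely; junk value `y` on non-composable
pairs. -/
noncomputable def semidirectAct (p : Quotient RA.setoid × G) (y : Γ) : Γ :=
  open scoped Classical in
  if h : SemidirectComposable LA RA p y then 𝒢.mul h.choose (LA.act p.2 y) else y

variable {LA RA}

lemma semidirectComposable_mk_iff {x : Γ} {t : G} {y : Γ} :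
    SemidirectComposable LA RA (Quotient.mk RA.setoid x, t) y
      ↔ ∃ k, RA.act (𝒢.src x) k = LA.act t (𝒢.rng y) := by
  constructor
  · rintro ⟨x', hx', hs⟩
    obtain ⟨k, rfl⟩ := RA.mk_eq_mk_iff.1 hx'.symm
    exact ⟨k, by rw [← RA.src_act, hs, LA.rng_act]⟩
  · rintro ⟨k, hk⟩
    exact ⟨RA.act x k, RA.mk_act x k, by rw [RA.src_act, hk, LA.rng_act]⟩

lemma semidirectAct_eq (hRfree : RA.Free) {p : Quotient RA.setoid × G} {x y : Γ}
    (hx : Quotient.mk RA.setoid x = p.1) (hxy : 𝒢.src x = 𝒢.rng (LA.act p.2 y)) :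
    semidirectAct LA RA p y = 𝒢.mul x (LA.act p.2 y) := by
  have h : SemidirectComposable LA RA p y := ⟨x, hx, hxy⟩
  obtain ⟨hq, hs⟩ := h.choose_spec
  rw [semidirectAct, dif_pos h, hRfree.eq_of_mk_eq_of_src_eq (hq.trans hx.symm) (hs.trans hxy.symm)]

lemma semidirectAct_mk (hRfree : RA.Free) {x y : Γ} {t : G}
    (hxy : 𝒢.src x = 𝒢.rng (LA.act t y)) :
    semidirectAct LA RA (Quotient.mk RA.setoid x, t) y = 𝒢.mul x (LA.act t y) :=
  semidirectAct_eq hRfree rfl hxy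

lemma semidirectAct_semidirectAct (hRfree : RA.Free) {x₁ x₂ y : Γ} {s t : G}
    (h₁ : 𝒢.src x₁ = 𝒢.rng (LA.act s x₂)) (h₂ : 𝒢.src x₂ = 𝒢.rng (LA.act t y)) :
    semidirectAct LA RA (Quotient.mk RA.setoid x₁, s)
        (semidirectAct LA RA (Quotient.mk RA.setoid x₂, t) y)
      = semidirectAct LA RA (Quotient.mk RA.setoid (𝒢.mul x₁ (LA.act s x₂)), s * t) y := by
  have hs : 𝒢.src (LA.act s x₂) = 𝒢.rng (LA.act s (LA.act t y)) := by
    rw [LA.src_act, h₂, ← LA.rng_act]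
  have h₁₂ : 𝒢.src (𝒢.mul x₁ (LA.act s x₂)) = 𝒢.rng (LA.act (s * t) y) := by
    rw [𝒢.src_mul _ _ h₁, hs, LA.act_act]
  have h₁' : 𝒢.src x₁ = 𝒢.rng (LA.act s (𝒢.mul x₂ (LA.act t y))) := by
    rw [h₁, LA.rng_act, LA.rng_act, 𝒢.rng_mul _ _ h₂]
  rw [semidirectAct_mk hRfree h₂, semidirectAct_mk hRfree h₁', semidirectAct_mk hRfree h₁₂,
    ← LA.mul_act _ _ _ h₂, ← 𝒢.mul_assoc' _ _ _ h₁ hs, LA.act_act]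

lemma eq_mk_unit_of_semidirectAct_eq_self (hLfree : LA.Free) (hRfree : RA.Free)
    {p : Quotient RA.setoid × G} {y : Γ} (hp : SemidirectComposable LA RA p y)
    (hfix : semidirectAct LA RA p y = y) : ∃ u ∈ 𝒢.unit, p = (Quotient.mk RA.setoid u, 1) := by
  obtain ⟨x, hx, hs⟩ := hp
  rw [semidirectAct_eq hRfree hx hs] at hfix
  have ht : p.2 = 1 := hLfree _ (𝒢.src y) <| by
    rw [← LA.src_act, ← 𝒢.src_mul _ _ hs, hfix]
  rw [ht, LA.one_act] at hs hfix
  exact ⟨x, 𝒢.mem_unit_of_mul_eq_self hs hfix, Prod.ext hx.symm ht⟩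

lemma continuousOn_semidirectAct [T2Space Γ] [LocallyCompactSpace Γ] (hRfree : RA.Free)
    (hRproper : RA.Proper) :
    ContinuousOn (fun q : (Quotient RA.setoid × G) × Γ => semidirectAct LA RA q.1 q.2)
      {q | SemidirectComposable LA RA q.1 q.2} := by
  let π : (Γ × G) × Γ → (Quotient RA.setoid × G) × Γ :=
    Prod.map (Prod.map (Quotient.mk RA.setoid) id) id
  refine ((RA.isOpenQuotientMap_mk.prodMap .id).prodMap .id : IsOpenQuotientMap π)
    |>.continuousOn_of_comp ?_
  -- the representative of `xH` composable with `t·y` is `x·h` with `h = RA.transl (g w)`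
  let g : (Γ × G) × Γ → Γ × Γ := fun w => (𝒢.src w.1.1, LA.act w.1.2 (𝒢.rng w.2))
  have hD : π ⁻¹' {q | SemidirectComposable LA RA q.1 q.2}
      = g ⁻¹' {p | ∃ k, RA.act p.1 k = p.2} := by
    ext w
    exact semidirectComposable_mk_iff
  have hrep : ∀ w ∈ π ⁻¹' {q | SemidirectComposable LA RA q.1 q.2},
      𝒢.src (RA.act w.1.1 (RA.transl (g w))) = 𝒢.rng (LA.act w.1.2 w.2) := by
    intro w hw
    rw [hD] at hw
    rw [RA.src_act, RA.act_transl hw, LA.rng_act]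
  have hg : Continuous g :=
    (𝒢.continuous_src.comp (continuous_fst.comp continuous_fst)).prodMk
      (LA.continuous_act.comp ((continuous_snd.comp continuous_fst).prodMk
        (𝒢.continuous_rng.comp continuous_snd)))
  have htransl : ContinuousOn (fun w => RA.transl (g w))
      (π ⁻¹' {q | SemidirectComposable LA RA q.1 q.2}) :=
    hD ▸ (RA.continuousOn_transl hRfree hRproper).comp hg.continuousOn (mapsTo_preimage _ _)
  refine ContinuousOn.congr (f := fun w =>
      𝒢.mul (RA.act w.1.1 (RA.transl (g w))) (LA.act w.1.2 w.2)) ?_ ?_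
  · refine 𝒢.continuous_mul.comp (ContinuousOn.prodMk ?_ ?_) hrep
    · exact RA.continuous_act.comp_continuousOn
        ((continuous_fst.comp continuous_fst).continuousOn.prodMk htransl)
    · exact (LA.continuous_act.comp
        ((continuous_snd.comp continuous_fst).prodMk continuous_snd)).continuousOn
  · exact fun w hw => semidirectAct_eq hRfree (RA.mk_act _ _) (hrep w hw)

lemma isCompact_semidirectAct_preimage [T2Space Γ] (hLproper : LA.Proper) (hRfree : RA.Free)
    {K : Set (Γ × Γ)} (hK : IsCompact K) :
    IsCompact {q : (Quotient RA.setoid × G) × Γ |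
      SemidirectComposable LA RA q.1 q.2 ∧ (semidirectAct LA RA q.1 q.2, q.2) ∈ K} := by
  -- `(xH, t)` is recovered from `w = x(t·y)` as `(w(t·y)⁻¹H, t)`
  let Ψ : Γ × G × Γ → (Quotient RA.setoid × G) × Γ := fun e =>
    ((Quotient.mk RA.setoid (𝒢.mul e.1 (𝒢.inv (LA.act e.2.1 e.2.2))), e.2.1), e.2.2)
  have hΨ : ContinuousOn Ψ {e | 𝒢.src e.1 = 𝒢.src (LA.act e.2.1 e.2.2)} := by
    have hinv : Continuous fun e : Γ × G × Γ => 𝒢.inv (LA.act e.2.1 e.2.2) :=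
      𝒢.continuous_inv.comp (LA.continuous_act.comp continuous_snd)
    refine ContinuousOn.prodMk
      (ContinuousOn.prodMk ?_ (continuous_fst.comp continuous_snd).continuousOn)
      (continuous_snd.comp continuous_snd).continuousOn
    refine continuous_quot_mk.comp_continuousOn
      (𝒢.continuous_mul.comp (continuous_fst.prodMk hinv).continuousOn fun e he => ?_)
    exact he.trans (𝒢.rng_inv _).symm
  suffices h : {q : (Quotient RA.setoid × G) × Γ | SemidirectComposable LA RA q.1 q.2 ∧
      (semidirectAct LA RA q.1 q.2, q.2) ∈ K}
      = Ψ '' {e | 𝒢.src e.1 = 𝒢.src (LA.act e.2.1 e.2.2) ∧ (e.1, e.2.2) ∈ K} from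
    h ▸ (hLproper.isCompact_setOf_src_eq_src_act hK).image_of_continuousOn
      (hΨ.mono fun _ he => he.1)
  ext q
  constructor
  · rintro ⟨⟨x, hx, hs⟩, hqK⟩
    rw [semidirectAct_eq hRfree hx hs] at hqK
    refine ⟨(𝒢.mul x (LA.act q.1.2 q.2), q.1.2, q.2), ⟨𝒢.src_mul _ _ hs, hqK⟩, ?_⟩
    simp only [Ψ, 𝒢.mul_mul_inv_cancel hs, hx]
  · rintro ⟨⟨w, t, y⟩, ⟨hs, hwy⟩, rfl⟩
    have hc : 𝒢.src (𝒢.mul w (𝒢.inv (LA.act t y))) = 𝒢.rng (LA.act t y) := by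
      rw [𝒢.src_mul _ _ (by rw [𝒢.rng_inv, hs]), 𝒢.src_inv]
    refine ⟨⟨_, rfl, hc⟩, ?_⟩
    rwa [semidirectAct_mk hRfree hc, 𝒢.mul_inv_mul_cancel hs]

variable {SP : TopGroupoid (Quotient RA.setoid × G)}

lemma src_eq_iff_semidirectComposable
    (hcomm : ∀ (t : G) (x : Γ) (h : H), LA.act t (RA.act x h) = RA.act (LA.act t x) h)
    (hSPsrc : ∀ (x : Γ) (t : G),
      SP.src (Quotient.mk RA.setoid x, t) = (Quotient.mk RA.setoid (LA.act t⁻¹ (𝒢.src x)), 1))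
    (p : Quotient RA.setoid × G) (y : Γ) :
    SP.src p = (Quotient.mk RA.setoid (𝒢.rng y), 1) ↔ SemidirectComposable LA RA p y := by
  obtain ⟨q, t⟩ := p
  obtain ⟨x, rfl⟩ := Quotient.exists_rep q
  rw [hSPsrc, semidirectComposable_mk_iff, Prod.mk.injEq, and_iff_left rfl, RA.mk_eq_mk_iff]
  exact exists_congr fun k => by rw [← hcomm, LA.act_inv_eq_iff]

noncomputable def semidirectGroupoidAction [T2Space Γ] [LocallyCompactSpace Γ]
    (hRfree : RA.Free) (hRproper : RA.Proper)
    (hcomm : ∀ (t : G) (x : Γ) (h : H), LA.act t (RA.act x h) = RA.act (LA.act t x) h)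
    (hSPunit : SP.unit = (Quotient.mk RA.setoid '' 𝒢.unit) ×ˢ ({1} : Set G))
    (hSPrng : ∀ (x : Γ) (t : G),
      SP.rng (Quotient.mk RA.setoid x, t) = (Quotient.mk RA.setoid (𝒢.rng x), 1))
    (hSPsrc : ∀ (x : Γ) (t : G),
      SP.src (Quotient.mk RA.setoid x, t) = (Quotient.mk RA.setoid (LA.act t⁻¹ (𝒢.src x)), 1))
    (hSPmul : ∀ (x y : Γ) (s t : G), 𝒢.src x = 𝒢.rng (LA.act s y) →
      SP.mul (Quotient.mk RA.setoid x, s) (Quotient.mk RA.setoid y, t)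
        = (Quotient.mk RA.setoid (𝒢.mul x (LA.act s y)), s * t)) :
    GroupoidLeftAction SP Γ where
  ρ y := (Quotient.mk RA.setoid (𝒢.rng y), 1)
  act := semidirectAct LA RA
  ρ_mem u := hSPunit ▸ mk_mem_prod (mem_image_of_mem _ (𝒢.rng_mem u)) rfl
  continuous_ρ := (continuous_quot_mk.comp 𝒢.continuous_rng).prodMk continuous_const
  ρ_surj v hv := by
    rw [hSPunit] at hv
    obtain ⟨⟨u, hu, hv₁⟩, hv₂⟩ := hv
    exact ⟨u, Prod.ext (by rw [𝒢.rng_unit u hu, hv₁]) hv₂.symm⟩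
  open_ρ U hU := by
    obtain ⟨V, hV, hUV⟩ := 𝒢.open_rng U hU
    refine ⟨(Quotient.mk RA.setoid '' V) ×ˢ univ,
      (RA.isOpenQuotientMap_mk.isOpenMap _ hV).prod isOpen_univ, ?_⟩
    rw [hSPunit, prod_inter_prod, univ_inter, ← RA.image_mk_image_rng hUV, prod_singleton,
      image_image, image_image]
  continuous_act := by
    simpa only [src_eq_iff_semidirectComposable hcomm hSPsrc]
      using continuousOn_semidirectAct hRfree hRproper
  ρ_act p y hpy := by
    obtain ⟨x, hx, hs⟩ := (src_eq_iff_semidirectComposable hcomm hSPsrc p y).1 hpy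
    obtain ⟨q, t⟩ := p
    obtain rfl : Quotient.mk RA.setoid x = q := hx
    rw [semidirectAct_mk hRfree hs, hSPrng, 𝒢.rng_mul _ _ hs]
  unit_act y := by
    rw [semidirectAct_mk hRfree (by rw [LA.one_act, 𝒢.src_unit _ (𝒢.rng_mem y)]), LA.one_act,
      𝒢.rng_mul_self]
  act_act p₁ p₂ y h₂ h₁₂ := by
    obtain ⟨x₂, hx₂, hs₂⟩ := (src_eq_iff_semidirectComposable hcomm hSPsrc p₂ y).1 h₂
    obtain ⟨q₂, t⟩ := p₂
    obtain rfl : Quotient.mk RA.setoid x₂ = q₂ := hx₂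
    rw [hSPrng, ← 𝒢.rng_mul _ _ hs₂, ← semidirectAct_mk hRfree hs₂] at h₁₂
    obtain ⟨x₁, hx₁, hs₁⟩ := (src_eq_iff_semidirectComposable hcomm hSPsrc p₁ _).1 h₁₂
    obtain ⟨q₁, s⟩ := p₁
    obtain rfl : Quotient.mk RA.setoid x₁ = q₁ := hx₁
    rw [semidirectAct_mk hRfree hs₂, LA.rng_act, 𝒢.rng_mul _ _ hs₂, ← LA.rng_act] at hs₁
    rw [hSPmul _ _ _ _ hs₁, semidirectAct_semidirectAct hRfree hs₁ hs₂]

end Semidirect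

theorem semidirect_quotient_acts_freely_properly_general
    {Γ G H : Type*} [TopologicalSpace Γ] [T2Space Γ] [LocallyCompactSpace Γ]
    [TopologicalSpace G] [Group G]
    [TopologicalSpace H] [Group H]
    (𝒢 : TopGroupoid Γ)
    (LA : GroupLeftAction 𝒢 G) (RA : GroupRightAction 𝒢 H)
    (hLfree : LA.Free) (hLproper : LA.Proper)
    (hRfree : RA.Free) (hRproper : RA.Proper)
    (hcomm : ∀ (t : G) (x : Γ) (h : H), LA.act t (RA.act x h) = RA.act (LA.act t x) h)
    (SP : TopGroupoid (Quotient RA.setoid × G))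
    (hSPunit : SP.unit = (Quotient.mk RA.setoid '' 𝒢.unit) ×ˢ ({1} : Set G))
    (hSPrng : ∀ (x : Γ) (t : G),
      SP.rng (Quotient.mk RA.setoid x, t) = (Quotient.mk RA.setoid (𝒢.rng x), 1))
    (hSPsrc : ∀ (x : Γ) (t : G),
      SP.src (Quotient.mk RA.setoid x, t) = (Quotient.mk RA.setoid (LA.act t⁻¹ (𝒢.src x)), 1))
    (hSPmul : ∀ (x y : Γ) (s t : G), 𝒢.src x = 𝒢.rng (LA.act s y) →
      SP.mul (Quotient.mk RA.setoid x, s) (Quotient.mk RA.setoid y, t)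
        = (Quotient.mk RA.setoid (𝒢.mul x (LA.act s y)), s * t)) :
    ∃ B : GroupoidLeftAction SP Γ,
      (∀ y : Γ, B.ρ y = (Quotient.mk RA.setoid (𝒢.rng y), 1)) ∧
      (∀ (x : Γ) (t : G) (y : Γ), 𝒢.src x = 𝒢.rng (LA.act t y) →
        B.act (Quotient.mk RA.setoid x, t) y = 𝒢.mul x (LA.act t y)) ∧
      B.Free ∧ B.Proper := by
  have hcomposable := src_eq_iff_semidirectComposable hcomm hSPsrc
  refine ⟨semidirectGroupoidAction hRfree hRproper hcomm hSPunit hSPrng hSPsrc hSPmul,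
    fun _ => rfl, fun _ _ _ hxy => semidirectAct_mk hRfree hxy, ?_, ?_⟩
  · intro p y hpy hfix
    obtain ⟨u, hu, rfl⟩ :=
      eq_mk_unit_of_semidirectAct_eq_self hLfree hRfree ((hcomposable p y).1 hpy) hfix
    exact hSPunit ▸ mk_mem_prod (mem_image_of_mem _ hu) rfl
  · intro K hK
    simpa only [semidirectGroupoidAction, hcomposable]
      using isCompact_semidirectAct_preimage hLproper hRfree hK

/-- For commuting free and proper actions of `G` (left) and `H` (right)
on a groupoid `Γ`, the semidirect-product groupoid `(Γ/H)⋊G` acts freely and properly on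
the left of the space `Γ`, with fibre map `ρ(y) = (r(y)·H, e)`, via `(xH,t)·y = x(t·y)`
whenever `s(x) = r(t·y)`. -/
theorem semidirect_quotient_acts_freely_properly
    {Γ G H : Type*} [TopologicalSpace Γ] [T2Space Γ] [LocallyCompactSpace Γ]
    [TopologicalSpace G] [Group G] [IsTopologicalGroup G] [T2Space G] [LocallyCompactSpace G]
    [TopologicalSpace H] [Group H] [IsTopologicalGroup H] [T2Space H] [LocallyCompactSpace H]
    (𝒢 : TopGroupoid Γ)
    (LA : GroupLeftAction 𝒢 G) (RA : GroupRightAction 𝒢 H)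
    (hLfree : LA.Free) (hLproper : LA.Proper)
    (hRfree : RA.Free) (hRproper : RA.Proper)
    (hcomm : ∀ (t : G) (x : Γ) (h : H), LA.act t (RA.act x h) = RA.act (LA.act t x) h)
    (Q : TopGroupoid (Quotient RA.setoid))
    (hQunit : Q.unit = Quotient.mk RA.setoid '' 𝒢.unit)
    (hQrng : ∀ x : Γ, Q.rng (Quotient.mk RA.setoid x) = Quotient.mk RA.setoid (𝒢.rng x))
    (hQsrc : ∀ x : Γ, Q.src (Quotient.mk RA.setoid x) = Quotient.mk RA.setoid (𝒢.src x))
    (hQmul : ∀ x y : Γ, 𝒢.src x = 𝒢.rng y →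
      Q.mul (Quotient.mk RA.setoid x) (Quotient.mk RA.setoid y)
        = Quotient.mk RA.setoid (𝒢.mul x y))
    (hQinv : ∀ x : Γ, Q.inv (Quotient.mk RA.setoid x) = Quotient.mk RA.setoid (𝒢.inv x))
    (SP : TopGroupoid (Quotient RA.setoid × G))
    (hSPunit : SP.unit = (Quotient.mk RA.setoid '' 𝒢.unit) ×ˢ ({1} : Set G))
    (hSPrng : ∀ (x : Γ) (t : G),
      SP.rng (Quotient.mk RA.setoid x, t) = (Quotient.mk RA.setoid (𝒢.rng x), 1))
    (hSPsrc : ∀ (x : Γ) (t : G),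
      SP.src (Quotient.mk RA.setoid x, t) = (Quotient.mk RA.setoid (LA.act t⁻¹ (𝒢.src x)), 1))
    (hSPmul : ∀ (x y : Γ) (s t : G), 𝒢.src x = 𝒢.rng (LA.act s y) →
      SP.mul (Quotient.mk RA.setoid x, s) (Quotient.mk RA.setoid y, t)
        = (Quotient.mk RA.setoid (𝒢.mul x (LA.act s y)), s * t))
    (hSPinv : ∀ (x : Γ) (t : G),
      SP.inv (Quotient.mk RA.setoid x, t) = (Quotient.mk RA.setoid (LA.act t⁻¹ (𝒢.inv x)), t⁻¹)) :
    ∃ B : GroupoidLeftAction SP Γ,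
      (∀ y : Γ, B.ρ y = (Quotient.mk RA.setoid (𝒢.rng y), 1)) ∧
      (∀ (x : Γ) (t : G) (y : Γ), 𝒢.src x = 𝒢.rng (LA.act t y) →
        B.act (Quotient.mk RA.setoid x, t) y = 𝒢.mul x (LA.act t y)) ∧
      B.Free ∧ B.Proper :=
  semidirect_quotient_acts_freely_properly_general 𝒢 LA RA hLfree hLproper hRfree hRproper hcomm SP
    hSPunit hSPrng hSPsrc hSPmul
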